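/- arXiv:2412.14745 — 7 statements merged into one kernel-verified Lean document; each statement's English description precedes it below -/
import Mathlib

section
/- Let G = ℕ and let E = {A ⊆ ℕ | A finite} ∪ {ℕ}. Then E is a closure system on ℕ, and for the corresponding closure operator γ (where γ(A) = A if A is finite and γ(A) = ℕ otherwise), there is no subset A ⊆ ℕ satisfying both (C1) A ⊊ γ(A) and (C2) for every family (A_j)_{j∈J} of proper subsets A_j ⊊ A one has ⋃_j γ(A_j) ≠ γ(A). In other words, the union-free generic family of implications of this closure system is empty. -/
/-! A set `A` with `A ⊊ γ A` must be infinite. Removing one point of `A` leaves a proper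
subset that is still infinite, hence has the same closure `ℕ`, so (C2) fails for `A`. -/

open Set

section FinClosure

variable {α : Type*}

open Classical in
noncomputable def finClosure (A : Set α) : Set α := if A.Finite then A else univ

lemma finClosure_of_finite {A : Set α} (h : A.Finite) : finClosure A = A := if_pos h

lemma finClosure_of_infinite {A : Set α} (h : A.Infinite) : finClosure A = univ := if_neg h

lemma infinite_of_ssubset_finClosure {A : Set α} (h : A ⊂ finClosure A) : A.Infinite :=
  fun hA => h.ne (finClosure_of_finite hA).symm

lemma exists_ssubset_finClosure_eq {A : Set α} (h : A ⊂ finClosure A) :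
    ∃ B ⊂ A, finClosure B = finClosure A := by
  have hA := infinite_of_ssubset_finClosure h
  obtain ⟨a, ha⟩ := hA.nonempty
  refine ⟨A \ {a}, sdiff_singleton_ssubset.2 ha, ?_⟩
  rw [finClosure_of_infinite hA, finClosure_of_infinite (hA.sdiff (finite_singleton a))]

end FinClosure

lemma iInter_finite_or_eq_univ {α ι : Type*} [Nonempty ι] {f : ι → Set α}
    (hf : ∀ i, (f i).Finite ∨ f i = univ) : (⋂ i, f i).Finite ∨ ⋂ i, f i = univ := by
  by_cases h : ∃ i, (f i).Finite
  · obtain ⟨i, hi⟩ := h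
    exact .inl (hi.subset (iInter_subset f i))
  · exact .inr (iInter_eq_univ.2 fun i => (hf i).resolve_left (not_exists.1 h i))

open Classical in
/-- The closure system of all finite subsets of ℕ together with ℕ has an empty
ufg-family of implications. -/
theorem stmt3 :
    let E : Set (Set ℕ) := {A | A.Finite} ∪ {Set.univ}
    let γ : Set ℕ → Set ℕ := fun A => if A.Finite then A else Set.univ
    (Set.univ ∈ E ∧
      ∀ (ι : Type) [Nonempty ι] (f : ι → Set ℕ), (∀ i, f i ∈ E) → (⋂ i, f i) ∈ E) ∧
    ¬ ∃ A : Set ℕ, A ⊂ γ A ∧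
        ∀ (ι : Type) (f : ι → Set ℕ), (∀ j, f j ⊂ A) → (⋃ j, γ (f j)) ≠ γ A := by
  intro E γ
  refine ⟨⟨.inr rfl, fun ι _ f hf => iInter_finite_or_eq_univ hf⟩, ?_⟩
  rintro ⟨A, hA, hC2⟩
  obtain ⟨B, hBA, hB⟩ := exists_ssubset_finClosure_eq (A := A) hA
  exact hC2 Unit (fun _ => B) (fun _ => hBA) (by rw [iUnion_const]; exact hB)
end

section
/- Let γ: 2^(ℝ²) → 2^(ℝ²) be the closed convex hull operator on ℝ². A subset A ⊆ ℝ² with 2 ≤ #A ≤ 3 whose points are affinely independent (i.e., the vertices of a nondegenerate segment or triangle) satisfies: (C1) A ⊊ γ(A), and (C2) for every family (A_j)_{j∈J} of proper subsets A_j ⊊ A, the union ⋃_j γ(A_j) is not equal to γ(A). -/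
/-!
The witness is the centroid `c` of `A`. It lies in the convex hull of `A`, but since all its
barycentric coordinates are positive, affine independence keeps it out of the affine span, hence
out of the convex hull, of every proper subset of `A`; convex hulls of finite sets are closed, so
`c` lies in `γ A` but in no `γ B` with `B ⊂ A`. This gives (C2) directly, and (C1) because
`c ∈ A` would make `{c}` such a `B`.
-/

open Finset

section Centroid

variable {k V P ι : Type*} [DivisionRing k] [CharZero k] [AddCommGroup V] [Module k V]
  [AddTorsor V P] [Fintype ι]

theorem AffineIndependent.centroid_notMem_affineSpan_image {p : ι → P}
    (hp : AffineIndependent k p) {t : Set ι} (ht : t ≠ Set.univ) :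
    univ.centroid k p ∉ affineSpan k (p '' t) := by
  intro h
  obtain ⟨i, hi⟩ := (Set.ne_univ_iff_exists_notMem t).mp ht
  have : Nonempty ι := ⟨i⟩
  have hw := hp.eq_zero_of_affineCombination_mem_affineSpan
    (univ.sum_centroidWeights_eq_one_of_nonempty k univ_nonempty) h (mem_univ i) hi
  simp only [centroidWeights_apply, card_univ, inv_eq_zero, Nat.cast_eq_zero] at hw
  exact Fintype.card_ne_zero hw

end Centroid

section Convex

variable {k E : Type*} [Field k] [LinearOrder k] [IsStrictOrderedRing k] [AddCommGroup E]
  [Module k E]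

theorem centroid_mem_convexHull_range {ι : Type*} [Fintype ι] [Nonempty ι] (p : ι → E) :
    univ.centroid k p ∈ convexHull k (Set.range p) := by
  rw [univ.centroid_eq_centerMass univ_nonempty]
  exact univ.centerMass_mem_convexHull (fun _ _ => by simp [centroidWeights_apply])
    (by simp [centroidWeights_apply]) fun i _ => Set.mem_range_self i

theorem AffineIndependent.centroid_notMem_convexHull_of_ssubset {A B : Set E} [Fintype A]
    (hA : AffineIndependent k ((↑) : A → E)) (hB : B ⊂ A) :
    univ.centroid k ((↑) : A → E) ∉ convexHull k B := by
  obtain ⟨a, haA, haB⟩ := Set.exists_of_ssubset hB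
  have hB_image : B = ((↑) : A → E) '' ((↑) : A → E) ⁻¹' B := by
    rw [Set.image_preimage_eq_inter_range, Subtype.range_coe, Set.inter_eq_left.mpr hB.subset]
  rw [hB_image]
  refine fun h => hA.centroid_notMem_affineSpan_image ?_ (convexHull_subset_affineSpan _ h)
  exact (Set.ne_univ_iff_exists_notMem _).mpr ⟨⟨a, haA⟩, haB⟩

end Convex

/-- A set of 2 or 3 affinely independent points in ℝ² is a ufg-premise of the
closure system of closed convex sets (conditions (C1) and (C2)). -/
theorem stmt4 (A : Set (EuclideanSpace ℝ (Fin 2)))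
    (hA : A.Finite) (hcard : 2 ≤ A.ncard ∧ A.ncard ≤ 3)
    (hind : AffineIndependent ℝ ((↑) : A → EuclideanSpace ℝ (Fin 2))) :
    let γ : Set (EuclideanSpace ℝ (Fin 2)) → Set (EuclideanSpace ℝ (Fin 2)) :=
      fun S => closure (convexHull ℝ S)
    A ⊂ γ A ∧
    ∀ (ι : Type) (f : ι → Set (EuclideanSpace ℝ (Fin 2))),
      (∀ j, f j ⊂ A) → (⋃ j, γ (f j)) ≠ γ A := by
  intro γ
  have := hA.fintype
  have : Nonempty A := (Set.nonempty_of_ncard_ne_zero (by omega)).to_subtype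
  set c := univ.centroid ℝ ((↑) : A → EuclideanSpace ℝ (Fin 2))
  have hγ {B} (hB : B ⊆ A) : γ B = convexHull ℝ B :=
    ((hA.subset hB).isClosed_convexHull ℝ).closure_eq
  have hc_mem : c ∈ γ A := by
    rw [hγ subset_rfl, ← Subtype.range_coe (s := A)]
    exact centroid_mem_convexHull_range _
  have hc_notMem {B} (hB : B ⊂ A) : c ∉ γ B := by
    rw [hγ hB.subset]; exact hind.centroid_notMem_convexHull_of_ssubset hB
  refine ⟨Set.ssubset_iff_subset_ne.mpr ⟨(subset_convexHull ℝ A).trans subset_closure, ?_⟩,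
    fun ι f hf hunion => ?_⟩
  · intro hA_eq
    have hcA : c ∈ A := hA_eq ▸ hc_mem
    have hc_ssubset : {c} ⊂ A := Set.ssubset_iff_subset_ne.mpr ⟨Set.singleton_subset_iff.mpr hcA,
      fun h => by rw [← h, Set.ncard_singleton] at hcard; omega⟩
    exact hc_notMem hc_ssubset (subset_closure (subset_convexHull ℝ _ (Set.mem_singleton c)))
  · obtain ⟨j, hj⟩ := Set.mem_iUnion.mp (hunion ▸ hc_mem)
    exact hc_notMem (hf j) hj
end

section
/- Let γ be a closure operator on G with closure system E. Suppose Q ⊆ G is a finite set of cardinality k strictly larger than the VC-dimension of E (as a set family on G). Then Q is not a ufg-premise: there exists a proper subset R ⊊ Q and an element g̃ ∈ (γ(R) ∩ Q) \ R, so the implication Q \ {g̃} → Q holds and Q is not minimal. Consequently, every ufg-premise has cardinality at most the VC-dimension of E. -/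
/-!
If no proper subset `R` of `Q` generates a new element of `Q`, i.e. `γ R ∩ Q = R` for every
`R ⊆ Q`, then the closed sets `γ T` cut out every `T ⊆ Q`, so `Q` is shattered and
`|Q| ≤ d`. Hence a larger `Q` contains some `g ∈ γ R \ R` with `R ⊊ Q`; then already
`γ (Q \ {g}) = γ Q`, a single closure of a proper subset, which violates (C2).
-/

/-- ufg-premise: (C1) and the union-free condition (C2). -/
def IsUfgPremise {G : Type*} (γ : Set G → Set G) (A : Set G) : Prop :=
  A ⊂ γ A ∧ ∀ (ι : Type) (f : ι → Set G), (∀ j, f j ⊂ A) → (⋃ j, γ (f j)) ≠ γ A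

theorem not_isUfgPremise_of_closure_sdiff_singleton_eq {G : Type*} {γ : Set G → Set G}
    {Q : Set G} {g : G} (hg : g ∈ Q) (h : γ (Q \ {g}) = γ Q) : ¬ IsUfgPremise γ Q :=
  fun hQ => hQ.2 Unit (fun _ => Q \ {g}) (fun _ => Set.sdiff_singleton_ssubset.2 hg)
    (by rw [Set.iUnion_const, h])

namespace ClosureOperator

variable {G : Type*} (c : ClosureOperator (Set G)) {Q R : Set G}

theorem exists_closed_inter_eq_of_closure_inter_subset (h : ∀ R ⊂ Q, c R ∩ Q ⊆ R)
    {T : Set G} (hT : T ⊆ Q) : ∃ E : Set G, c E = E ∧ E ∩ Q = T := by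
  refine ⟨c T, c.idempotent T, ?_⟩
  rcases hT.ssubset_or_eq with hTQ | rfl
  · exact (h T hTQ).antisymm (Set.subset_inter (c.le_closure T) hT)
  · exact Set.inter_eq_right.2 (c.le_closure T)

theorem exists_ssubset_mem_closure_inter_sdiff {d : ℕ}
    (hVC : ∀ S : Set G, S.Finite → (∀ T ⊆ S, ∃ E : Set G, c E = E ∧ E ∩ S = T) → S.ncard ≤ d)
    (hQ : Q.Finite) (hcard : d < Q.ncard) : ∃ R ⊂ Q, ∃ g, g ∈ (c R ∩ Q) \ R := by
  by_contra! h
  have hshatter : ∀ T ⊆ Q, ∃ E : Set G, c E = E ∧ E ∩ Q = T := fun T hT =>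
    c.exists_closed_inter_eq_of_closure_inter_subset
      (fun R hR g hg => by_contra fun hgR => h R hR g ⟨hg, hgR⟩) hT
  exact hcard.not_ge (hVC Q hQ hshatter)

theorem closure_sdiff_singleton_eq (hRQ : R ⊆ Q) {g : G} (hg : g ∈ c R \ R) :
    c (Q \ {g}) = c Q := by
  have hR : R ⊆ Q \ {g} := fun x hx => ⟨hRQ hx, fun hxg => hg.2 (hxg ▸ hx)⟩
  have hQ : Q ⊆ c (Q \ {g}) :=
    (Set.subset_insert_sdiff_singleton g Q).trans
      (Set.insert_subset (c.monotone hR hg.1) (c.le_closure _))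
  exact (c.monotone Set.sdiff_subset).antisymm (c.le_closure_iff.1 hQ)

theorem not_isUfgPremise_of_mem_closure_sdiff (hRQ : R ⊆ Q) {g : G} (hg : g ∈ (c R ∩ Q) \ R) :
    ¬ IsUfgPremise c Q :=
  not_isUfgPremise_of_closure_sdiff_singleton_eq hg.1.2
    (c.closure_sdiff_singleton_eq hRQ ⟨hg.1.1, hg.2⟩)

end ClosureOperator

/-- A finite set whose cardinality exceeds the VC-dimension of the closure system
is not a ufg-premise: some proper subset already implies one of its elements.
Consequently every ufg-premise has cardinality at most the VC-dimension. -/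
theorem stmt7 {G : Type*} (γ : Set G → Set G)
    (hext : ∀ A : Set G, A ⊆ γ A)
    (hmono : ∀ A B : Set G, A ⊆ B → γ A ⊆ γ B)
    (hidem : ∀ A : Set G, γ (γ A) = γ A)
    (d : ℕ)
    (hVC : ∀ S : Set G, S.Finite →
      (∀ T ⊆ S, ∃ E : Set G, γ E = E ∧ E ∩ S = T) → S.ncard ≤ d)
    (Q : Set G) (hQ : Q.Finite) (hcard : d < Q.ncard) :
    ((∃ R : Set G, R ⊂ Q ∧ ∃ g, g ∈ (γ R ∩ Q) \ R) ∧ ¬ IsUfgPremise γ Q) ∧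
    (∀ A : Set G, A.Finite → IsUfgPremise γ A → A.ncard ≤ d) := by
  let c : ClosureOperator (Set G) :=
    .mk' γ (fun A B => hmono A B) hext (fun A => (hidem A).le)
  have key (A : Set G) (hA : A.Finite) (hlt : d < A.ncard) :
      (∃ R : Set G, R ⊂ A ∧ ∃ g, g ∈ (γ R ∩ A) \ R) ∧ ¬ IsUfgPremise γ A := by
    obtain ⟨R, hRA, g, hg⟩ := c.exists_ssubset_mem_closure_inter_sdiff hVC hA hlt
    exact ⟨⟨R, hRA, g, hg⟩, c.not_isUfgPremise_of_mem_closure_sdiff hRA.subset hg⟩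
  refine ⟨key Q hQ hcard, fun A hA hufg => ?_⟩
  by_contra! hlt
  exact (key A hA hlt).2 hufg
end

section
/- Let D: G → ℝ be a depth function on a set G with closure operator γ (from a formal context), and define D^qc(g) = sup{α ∈ ℝ | g ∈ γ(Cont_{D,α})}, where Cont_{D,α} = {x ∈ G | D(x) ≥ α}. Then D^qc is quasiconcave: for every α ∈ ℝ, the contour set {g ∈ G | D^qc(g) ≥ α} is closed under γ, i.e., γ({g | D^qc(g) ≥ α}) = {g | D^qc(g) ≥ α}. (Assume G finite and D takes finitely many values, so suprema are attained.) -/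
theorem setOf_le_eq_closure_setOf_le {G β : Type*} [Preorder β] (γ : Set G → Set G)
    (hmono : ∀ A B : Set G, A ⊆ B → γ A ⊆ γ B) (D Dqc : G → β)
    (hDqc : ∀ g, IsGreatest {α : β | g ∈ γ {x | α ≤ D x}} (Dqc g)) (α : β) :
    {g | α ≤ Dqc g} = γ {x | α ≤ D x} := by
  ext g
  exact ⟨fun hg => hmono _ _ (fun _ hx => le_trans hg hx) (hDqc g).1, fun hg => (hDqc g).2 hg⟩

theorem stmt9_general {G : Type*} (γ : Set G → Set G)
    (hmono : ∀ A B : Set G, A ⊆ B → γ A ⊆ γ B)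
    (hidem : ∀ A : Set G, γ (γ A) = γ A)
    (D Dqc : G → ℝ)
    (hDqc : ∀ g, IsGreatest {α : ℝ | g ∈ γ {x | α ≤ D x}} (Dqc g)) :
    ∀ α : ℝ, γ {g | α ≤ Dqc g} = {g | α ≤ Dqc g} := by
  intro α
  rw [setOf_le_eq_closure_setOf_le γ hmono D Dqc hDqc α, hidem]

/-- The quasiconcave version `D^qc` of a depth function, defined via attained
suprema over contour sets, is quasiconcave: all its upper level sets are
closed sets of the closure operator. -/
theorem stmt9 {G : Type*} [Fintype G] (γ : Set G → Set G)
    (hext : ∀ A : Set G, A ⊆ γ A)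
    (hmono : ∀ A B : Set G, A ⊆ B → γ A ⊆ γ B)
    (hidem : ∀ A : Set G, γ (γ A) = γ A)
    (D Dqc : G → ℝ)
    (hDqc : ∀ g, IsGreatest {α : ℝ | g ∈ γ {x | α ≤ D x}} (Dqc g)) :
    ∀ α : ℝ, γ {g | α ≤ Dqc g} = {g | α ≤ Dqc g} :=
  stmt9_general γ hmono hidem D Dqc hDqc
end

section
/- Let γ₁, γ₂ be closure operators of two formal contexts on the same set G and γ₁₂ the closure operator of their joined context (so γ₁₂(A) = γ₁(A) ∩ γ₂(A)). If every ufg-premise of γ₁ has cardinality at most u₁ and every ufg-premise of γ₂ has cardinality at most u₂, then every ufg-premise of γ₁₂ has cardinality at most u₁ + u₂. -/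
namespace IsUfgPremise

variable {G : Type*} {γ : Set G → Set G} {A : Set G}

theorem exists_forall_ssubset_notMem (hmono : Monotone γ) (hA : A.Finite)
    (h : IsUfgPremise γ A) : ∃ b ∈ γ A, ∀ B ⊂ A, b ∉ γ B := by
  have : Finite A := hA.to_subtype
  obtain ⟨n, ⟨e⟩⟩ := Finite.exists_equiv_fin A
  let f : Fin n → Set G := fun i => A \ {(e.symm i : G)}
  have hf : ∀ i, f i ⊂ A := fun i => Set.sdiff_singleton_ssubset.mpr (e.symm i).2
  have hsub : (⋃ i, γ (f i)) ⊂ γ A :=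
    (Set.iUnion_subset fun i => hmono (hf i).subset).ssubset_of_ne (h.2 _ f hf)
  obtain ⟨b, hbA, hbf⟩ := Set.exists_of_ssubset hsub
  refine ⟨b, hbA, fun B hB hbB => hbf ?_⟩
  obtain ⟨a, haA, haB⟩ := Set.exists_of_ssubset hB
  have hBf : B ⊆ f (e ⟨a, haA⟩) := by
    simpa [f] using Set.subset_sdiff_singleton hB.subset haB
  exact Set.mem_iUnion.mpr ⟨_, hmono hBf hbB⟩

theorem of_forall_ssubset_notMem {b : G} (hA : A ⊂ γ A) (hb : b ∈ γ A)
    (hmin : ∀ B ⊂ A, b ∉ γ B) : IsUfgPremise γ A := by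
  refine ⟨hA, fun ι f hf hU => ?_⟩
  obtain ⟨j, hj⟩ := Set.mem_iUnion.mp (hU ▸ hb)
  exact hmin (f j) (hf j) hj

end IsUfgPremise

theorem exists_subset_minimal_mem {G : Type*} (γ : Set G → Set G) {S : Set G} {b : G}
    (hS : S.Finite) (hb : b ∈ γ S) : ∃ T ⊆ S, b ∈ γ T ∧ ∀ B ⊂ T, b ∉ γ B := by
  obtain ⟨T, hT⟩ := (hS.finite_subsets.inter_of_left {T | b ∈ γ T}).exists_minimal
    ⟨S, Set.Subset.rfl, hb⟩
  exact ⟨T, hT.prop.1, hT.prop.2,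
    fun B hB hbB => hT.not_prop_of_lt hB ⟨hB.subset.trans hT.prop.1, hbB⟩⟩

theorem exists_isUfgPremise_subset {G : Type*} {γ δ : Set G → Set G} {A : Set G} {b : G}
    (hδγ : ∀ X, δ X ⊆ γ X) (hδext : ∀ X, X ⊆ δ X) (hA : A.Finite) (hAδ : A ⊂ δ A)
    (hbA : b ∈ γ A) (hmin : ∀ B ⊂ A, b ∉ δ B) :
    ∃ T ⊆ A, b ∈ γ T ∧ IsUfgPremise γ T := by
  obtain ⟨T, hTA, hbT, hTmin⟩ := exists_subset_minimal_mem γ hA hbA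
  have hTγ : T ⊂ γ T := by
    rcases hTA.eq_or_ssubset with rfl | hTA
    · exact hAδ.trans_subset (hδγ T)
    · have hbT' : b ∉ T := fun h => hmin T hTA (hδext T h)
      exact ((hδext T).trans (hδγ T)).ssubset_of_ne fun h => hbT' (h ▸ hbT)
  exact ⟨T, hTA, hbT, .of_forall_ssubset_notMem hTγ hbT hTmin⟩

theorem stmt12_general {G : Type*} (γ₁ γ₂ γ₁₂ : Set G → Set G)
    (hext₁ : ∀ A : Set G, A ⊆ γ₁ A)
    (hmono₁ : ∀ A B : Set G, A ⊆ B → γ₁ A ⊆ γ₁ B)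
    (hext₂ : ∀ A : Set G, A ⊆ γ₂ A)
    (hmono₂ : ∀ A B : Set G, A ⊆ B → γ₂ A ⊆ γ₂ B)
    (hjoin : ∀ A : Set G, γ₁₂ A = γ₁ A ∩ γ₂ A)
    (u₁ u₂ : ℕ)
    (h₁ : ∀ A : Set G, A.Finite → IsUfgPremise γ₁ A → A.ncard ≤ u₁)
    (h₂ : ∀ A : Set G, A.Finite → IsUfgPremise γ₂ A → A.ncard ≤ u₂) :
    ∀ A : Set G, A.Finite → IsUfgPremise γ₁₂ A → A.ncard ≤ u₁ + u₂ := by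
  intro A hA hufg
  have hmono : Monotone γ₁₂ := fun X Y h => by
    simpa only [hjoin] using Set.inter_subset_inter (hmono₁ X Y h) (hmono₂ X Y h)
  have hext : ∀ X, X ⊆ γ₁₂ X := fun X => by
    simpa only [hjoin] using Set.subset_inter (hext₁ X) (hext₂ X)
  obtain ⟨b, hbA, hmin⟩ := hufg.exists_forall_ssubset_notMem hmono hA
  rw [hjoin] at hbA
  have hle₁ : ∀ X, γ₁₂ X ⊆ γ₁ X := fun X => (hjoin X).trans_subset Set.inter_subset_left
  have hle₂ : ∀ X, γ₁₂ X ⊆ γ₂ X := fun X => (hjoin X).trans_subset Set.inter_subset_right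
  obtain ⟨T₁, hT₁A, hbT₁, hT₁⟩ := exists_isUfgPremise_subset hle₁ hext hA hufg.1 hbA.1 hmin
  obtain ⟨T₂, hT₂A, hbT₂, hT₂⟩ := exists_isUfgPremise_subset hle₂ hext hA hufg.1 hbA.2 hmin
  have hcover : A ⊆ T₁ ∪ T₂ := by
    by_contra hnot
    refine hmin _ ((Set.union_subset hT₁A hT₂A).ssubset_of_not_subset hnot) ?_
    rw [hjoin]
    exact ⟨hmono₁ _ _ Set.subset_union_left hbT₁, hmono₂ _ _ Set.subset_union_right hbT₂⟩
  have hT₁fin := hA.subset hT₁A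
  have hT₂fin := hA.subset hT₂A
  calc A.ncard ≤ (T₁ ∪ T₂).ncard := Set.ncard_le_ncard hcover (hT₁fin.union hT₂fin)
    _ ≤ T₁.ncard + T₂.ncard := Set.ncard_union_le _ _
    _ ≤ u₁ + u₂ := add_le_add (h₁ _ hT₁fin hT₁) (h₂ _ hT₂fin hT₂)

/-- If ufg-premises of two closure operators have cardinality at most `u₁` resp.
`u₂`, then ufg-premises of the joined closure operator `A ↦ γ₁ A ∩ γ₂ A`
have cardinality at most `u₁ + u₂`. -/
theorem stmt12 {G : Type*} (γ₁ γ₂ γ₁₂ : Set G → Set G)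
    (hext₁ : ∀ A : Set G, A ⊆ γ₁ A)
    (hmono₁ : ∀ A B : Set G, A ⊆ B → γ₁ A ⊆ γ₁ B)
    (hidem₁ : ∀ A : Set G, γ₁ (γ₁ A) = γ₁ A)
    (hext₂ : ∀ A : Set G, A ⊆ γ₂ A)
    (hmono₂ : ∀ A B : Set G, A ⊆ B → γ₂ A ⊆ γ₂ B)
    (hidem₂ : ∀ A : Set G, γ₂ (γ₂ A) = γ₂ A)
    (hjoin : ∀ A : Set G, γ₁₂ A = γ₁ A ∩ γ₂ A)
    (u₁ u₂ : ℕ)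
    (h₁ : ∀ A : Set G, A.Finite → IsUfgPremise γ₁ A → A.ncard ≤ u₁)
    (h₂ : ∀ A : Set G, A.Finite → IsUfgPremise γ₂ A → A.ncard ≤ u₂) :
    ∀ A : Set G, A.Finite → IsUfgPremise γ₁₂ A → A.ncard ≤ u₁ + u₂ :=
  stmt12_general γ₁ γ₂ γ₁₂ hext₁ hmono₁ hext₂ hmono₂ hjoin u₁ u₂ h₁ h₂
end

section
/- Let γ be the closure operator of a hierarchical-nominal formal context. Then any two extents E₁, E₂ are either nested (E₁ ⊆ E₂ or E₂ ⊆ E₁) or disjoint (E₁ ∩ E₂ = ∅). Consequently, any quasiconcave depth function on hierarchical-nominal data with L levels has at most L + 2 distinct values attained on a chain of nested contour sets. -/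
/-!
A nonempty set `A` is closed up to the longest prefix its members share: with `a ∈ A` and
`k` that length, `γ A` is the prefix ball of `a` of radius `k` (radius `0` giving all of `G`),
while `γ ∅ = ∅`. Two prefix balls that meet are nested, the one of smaller radius containing
the other. The upper level sets of a quasiconcave depth function, taken at its values, form a
strictly decreasing chain of nonempty extents, along which the shared prefix length strictly
increases; it ranges over `0, …, L`, so there are at most `L + 1 ≤ L + 2` values.
-/

/-- Closure operator of the hierarchical-nominal formal context with `L` levels. -/
def hierGamma {G : Type*} (L : ℕ) (c : G → Fin L → ℕ) : Set G → Set G :=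
  fun A => {g | ∀ m ∈ {m : ℕ × (ℕ → ℕ) | ∀ a ∈ A,
      1 ≤ m.1 ∧ m.1 ≤ L ∧ ∀ i : Fin L, (i : ℕ) < m.1 → c a i = m.2 i},
    1 ≤ m.1 ∧ m.1 ≤ L ∧ ∀ i : Fin L, (i : ℕ) < m.1 → c g i = m.2 i}

namespace HierNominal

variable {G : Type*} {L : ℕ} (c : G → Fin L → ℕ)

def prefixBall (g : G) (k : ℕ) : Set G :=
  {h | ∀ i : Fin L, (i : ℕ) < k → c h i = c g i}

def SharePrefix (A : Set G) (k : ℕ) : Prop :=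
  ∀ g ∈ A, ∀ h ∈ A, ∀ i : Fin L, (i : ℕ) < k → c g i = c h i

open Classical in
noncomputable def prefixLen (A : Set G) : ℕ :=
  Nat.findGreatest (SharePrefix c A) L

variable {c}

lemma prefixLen_le (A : Set G) : prefixLen c A ≤ L := by
  classical exact Nat.findGreatest_le L

lemma sharePrefix_prefixLen (A : Set G) : SharePrefix c A (prefixLen c A) := by
  classical
  exact Nat.findGreatest_spec (Nat.zero_le L) fun _ _ _ _ _ hi => absurd hi (Nat.not_lt_zero _)

lemma le_prefixLen {A : Set G} {k : ℕ} (hkL : k ≤ L) (hk : SharePrefix c A k) :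
    k ≤ prefixLen c A := by
  classical exact Nat.le_findGreatest hkL hk

lemma SharePrefix.mono {A B : Set G} {k : ℕ} (hB : SharePrefix c B k) (hAB : A ⊆ B) :
    SharePrefix c A k :=
  fun g hg h hh => hB g (hAB hg) h (hAB hh)

lemma hierGamma_empty : hierGamma L c ∅ = ∅ :=
  Set.eq_empty_of_forall_notMem fun _ hg =>
    absurd (hg (0, 0) fun _ ha => ha.elim).1 (by norm_num)

theorem hierGamma_eq_prefixBall {A : Set G} {a : G} (ha : a ∈ A) :
    hierGamma L c A = prefixBall c a (prefixLen c A) := by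
  ext g
  constructor
  · intro hg i hi
    -- test `g` against the attribute "starts with the first `prefixLen c A` entries of `c a`"
    let f : ℕ → ℕ := fun n => if h : n < L then c a ⟨n, h⟩ else 0
    have hf (j : Fin L) : f j = c a j := dif_pos j.isLt
    have hA : ∀ a' ∈ A, 1 ≤ prefixLen c A ∧ prefixLen c A ≤ L ∧
        ∀ j : Fin L, (j : ℕ) < prefixLen c A → c a' j = f j := fun a' ha' =>
      ⟨by omega, prefixLen_le A, fun j hj =>
        (hf j).symm ▸ sharePrefix_prefixLen A a' ha' a ha j hj⟩
    exact (hf i) ▸ (hg (prefixLen c A, f) hA).2.2 i hi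
  · intro hg m hm
    obtain ⟨hm1, hmL, hma⟩ := hm a ha
    have hshare : SharePrefix c A m.1 := fun x hx y hy i hi =>
      ((hm x hx).2.2 i hi).trans ((hm y hy).2.2 i hi).symm
    exact ⟨hm1, hmL, fun i hi =>
      (hg i (hi.trans_le (le_prefixLen hmL hshare))).trans (hma i hi)⟩

lemma hierGamma_eq_empty_or_prefixBall (A : Set G) :
    hierGamma L c A = ∅ ∨ ∃ a k, hierGamma L c A = prefixBall c a k := by
  rcases A.eq_empty_or_nonempty with rfl | ⟨a, ha⟩
  · exact Or.inl hierGamma_empty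
  · exact Or.inr ⟨a, _, hierGamma_eq_prefixBall ha⟩

lemma prefixBall_subset_of_mem_of_le {a b x : G} {k k' : ℕ} (hxa : x ∈ prefixBall c a k)
    (hxb : x ∈ prefixBall c b k') (hk : k ≤ k') : prefixBall c b k' ⊆ prefixBall c a k :=
  fun y hy i hi => by
    rw [hy i (hi.trans_le hk), ← hxb i (hi.trans_le hk), hxa i hi]

theorem prefixBall_nested_or_disjoint (a b : G) (k k' : ℕ) :
    prefixBall c a k ⊆ prefixBall c b k' ∨ prefixBall c b k' ⊆ prefixBall c a k ∨
      prefixBall c a k ∩ prefixBall c b k' = ∅ := by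
  rcases (prefixBall c a k ∩ prefixBall c b k').eq_empty_or_nonempty with hdisj | ⟨x, hxa, hxb⟩
  · exact Or.inr (Or.inr hdisj)
  rcases le_total k k' with hk | hk
  · exact Or.inr (Or.inl (prefixBall_subset_of_mem_of_le hxa hxb hk))
  · exact Or.inl (prefixBall_subset_of_mem_of_le hxb hxa hk)

theorem hierGamma_nested_or_disjoint (A B : Set G) :
    hierGamma L c A ⊆ hierGamma L c B ∨ hierGamma L c B ⊆ hierGamma L c A ∨
      hierGamma L c A ∩ hierGamma L c B = ∅ := by
  rcases hierGamma_eq_empty_or_prefixBall (c := c) A with hA | ⟨a, k, hA⟩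
  · simp [hA]
  rcases hierGamma_eq_empty_or_prefixBall (c := c) B with hB | ⟨b, k', hB⟩
  · simp [hB]
  rw [hA, hB]
  exact prefixBall_nested_or_disjoint a b k k'

theorem prefixLen_lt_of_ssubset {E F : Set G} (hE : hierGamma L c E = E)
    (hF : hierGamma L c F = F) (hEne : E.Nonempty) (hEF : E ⊂ F) :
    prefixLen c F < prefixLen c E := by
  obtain ⟨a, ha⟩ := hEne
  have hle : prefixLen c F ≤ prefixLen c E :=
    le_prefixLen (prefixLen_le F) ((sharePrefix_prefixLen F).mono hEF.subset)
  refine hle.lt_of_ne fun heq => hEF.ne ?_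
  rw [← hE, ← hF, hierGamma_eq_prefixBall ha, hierGamma_eq_prefixBall (hEF.subset ha), heq]

theorem ncard_range_le_of_hierGamma_superlevel {α : Type*} [LinearOrder α] (D : G → α)
    (hD : ∀ v, hierGamma L c {g | v ≤ D g} = {g | v ≤ D g}) :
    (Set.range D).ncard ≤ L + 1 := by
  have hmono : StrictMonoOn (fun v => prefixLen c {g | v ≤ D g}) (Set.range D) := by
    rintro _ ⟨gv, rfl⟩ _ ⟨gw, rfl⟩ hvw
    refine prefixLen_lt_of_ssubset (hD _) (hD _) ⟨gw, le_rfl⟩ ?_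
    exact LE.le.ssubset_of_mem_notMem (fun g hg => hvw.le.trans hg) le_rfl hvw.not_ge
  calc (Set.range D).ncard ≤ (Set.Iic L).ncard :=
        Set.ncard_le_ncard_of_injOn _ (fun v _ => prefixLen_le _) hmono.injOn
    _ = L + 1 := Set.ncard_Iic_nat L

end HierNominal

theorem stmt16_general {G : Type*} (L : ℕ) (c : G → Fin L → ℕ) :
    (∀ E₁ E₂ : Set G, (∃ A, E₁ = hierGamma L c A) → (∃ A, E₂ = hierGamma L c A) →
      E₁ ⊆ E₂ ∨ E₂ ⊆ E₁ ∨ E₁ ∩ E₂ = ∅) ∧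
    (∀ D : G → ℝ,
      (∀ α : ℝ, hierGamma L c {g | α ≤ D g} = {g | α ≤ D g}) →
      (Set.range D).ncard ≤ L + 2) := by
  constructor
  · rintro _ _ ⟨A, rfl⟩ ⟨B, rfl⟩
    exact HierNominal.hierGamma_nested_or_disjoint A B
  · intro D hD
    exact (HierNominal.ncard_range_le_of_hierGamma_superlevel D hD).trans (Nat.le_succ _)

/-- For hierarchical-nominal data, any two extents are nested or disjoint, and
a quasiconcave depth function takes at most `L + 2` distinct values. -/
theorem stmt16 {G : Type*} [Finite G] (L : ℕ) (hL : 1 ≤ L) (c : G → Fin L → ℕ) :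
    (∀ E₁ E₂ : Set G, (∃ A, E₁ = hierGamma L c A) → (∃ A, E₂ = hierGamma L c A) →
      E₁ ⊆ E₂ ∨ E₂ ⊆ E₁ ∨ E₁ ∩ E₂ = ∅) ∧
    (∀ D : G → ℝ,
      (∀ α : ℝ, hierGamma L c {g | α ≤ D g} = {g | α ≤ D g}) →
      (Set.range D).ncard ≤ L + 2) :=
  stmt16_general L c
end

section
/- Let γ be a closure operator on G and let g₁, g₂ ∈ G with γ({g₂}) ⊆ γ({g₁}). Then every ufg-conclusion containing g₁ also contains g₂: for every ufg-premise A with g₁ ∈ γ(A), one has g₂ ∈ γ(A). Consequently any depth function defined as a (weighted) measure of ufg-premises whose conclusions contain a point satisfies isotonicity: D(g₁) ≤ D(g₂). -/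
open Finset

theorem ClosureOperator.mem_of_closure_singleton_subset {α : Type*} (c : ClosureOperator (Set α))
    {a b : α} (hab : c {b} ⊆ c {a}) {A : Set α} (ha : a ∈ c A) : b ∈ c A :=
  have hcA : c {a} ⊆ c A := c.le_closure_iff.mp (Set.singleton_subset_iff.mpr ha)
  hcA (hab (c.le_closure _ rfl))

theorem Finset.sum_ite_le_sum_ite {ι M : Type*} [AddCommMonoid M] [PartialOrder M]
    [IsOrderedAddMonoid M] (s : Finset ι) {P Q : ι → Prop} [DecidablePred P] [DecidablePred Q]
    {w : ι → M} (hw : ∀ i ∈ s, 0 ≤ w i) (hPQ : ∀ i ∈ s, P i → Q i) :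
    ∑ i ∈ s, (if P i then w i else 0) ≤ ∑ i ∈ s, if Q i then w i else 0 := by
  refine sum_le_sum fun i hi => ?_
  by_cases hP : P i
  · rw [if_pos hP, if_pos (hPQ i hi hP)]
  · rw [if_neg hP]
    exact ite_nonneg (hw i hi) le_rfl

theorem Finset.sum_mul_div_le_sum_mul_div {ι : Type*} (s : Finset ι) {c a b d : ι → ℝ}
    (hc : ∀ i ∈ s, 0 ≤ c i) (hab : ∀ i ∈ s, a i ≤ b i) (hd : ∀ i ∈ s, 0 ≤ d i) :
    ∑ i ∈ s, c i * a i / d i ≤ ∑ i ∈ s, c i * b i / d i :=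
  sum_le_sum fun i hi =>
    div_le_div_of_nonneg_right (mul_le_mul_of_nonneg_left (hab i hi) (hc i hi)) (hd i hi)

open Classical in
/-- Isotonicity: if `γ {g₂} ⊆ γ {g₁}`, then every ufg-conclusion containing `g₁`
contains `g₂`, and consequently the ufg-depth (a weighted probability that a
randomly drawn ufg-conclusion contains the point) satisfies `D g₁ ≤ D g₂`. -/
theorem stmt17 {G : Type*} [Fintype G] (γ : Set G → Set G)
    (hext : ∀ A : Set G, A ⊆ γ A)
    (hmono : ∀ A B : Set G, A ⊆ B → γ A ⊆ γ B)
    (hidem : ∀ A : Set G, γ (γ A) = γ A)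
    (g₁ g₂ : G) (hg : γ {g₂} ⊆ γ {g₁})
    (N : ℕ) (C : ℕ → ℝ) (hC : ∀ j, 0 < C j)
    (p : G → ℝ) (hp : ∀ g, 0 ≤ p g)
    (D : G → ℝ)
    (hD : ∀ g, D g = ∑ j ∈ Finset.range N, C j *
        (∑ x : Fin j → G,
          if IsUfgPremise γ (Set.range x) ∧ g ∈ γ (Set.range x)
          then ∏ i, p (x i) else 0) /
        (∑ x : Fin j → G,
          if IsUfgPremise γ (Set.range x) then ∏ i, p (x i) else 0)) :
    (∀ A : Set G, IsUfgPremise γ A → g₁ ∈ γ A → g₂ ∈ γ A) ∧ D g₁ ≤ D g₂ := by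
  let c : ClosureOperator (Set G) :=
    .mk' γ (fun A B => hmono A B) hext fun A => (hidem A).le
  have hmem : ∀ A : Set G, g₁ ∈ γ A → g₂ ∈ γ A := fun A =>
    c.mem_of_closure_singleton_subset hg
  have hweight : ∀ j, ∀ x : Fin j → G, 0 ≤ ∏ i, p (x i) := fun j x =>
    prod_nonneg fun i _ => hp (x i)
  refine ⟨fun A _ => hmem A, ?_⟩
  rw [hD, hD]
  refine sum_mul_div_le_sum_mul_div _ (fun j _ => (hC j).le)
    (fun j _ => sum_ite_le_sum_ite _ (fun x _ => hweight j x)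
      fun x _ hx => ⟨hx.1, hmem _ hx.2⟩)
    fun j _ => sum_nonneg fun x _ => ite_nonneg (hweight j x) le_rfl
end
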